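/- Let n ≥ 1, let f₁, f₂ : ℝⁿ → ℝ be convex functions and x ∈ ℝⁿ. Assume that D_t f₂(x) ⊆ D_t f₁(x) for every t > 0. Then for every t > 0 there exists ε₀ ≥ 0 such that for all ε ≥ ε₀ one has ∂_ε f₂(x) ⊆ ∂_ε f₁(x) + closedBall(0, ε/t) (Minkowski sum with the closed ball of radius ε/t centered at the origin). -/

import Mathlib

open scoped RealInnerProductSpace Pointwise

/-- The ε-subdifferential of `g` at `x`. -/
def epsSubdiff {n : ℕ} (g : EuclideanSpace ℝ (Fin n) → ℝ) (ε : ℝ)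
    (x : EuclideanSpace ℝ (Fin n)) : Set (EuclideanSpace ℝ (Fin n)) :=
  {ξ | ∀ y, g y ≥ g x + ⟪ξ, y - x⟫ - ε}

/-- The subdifferential of `g` at `x`. -/
def subdiff {n : ℕ} (g : EuclideanSpace ℝ (Fin n) → ℝ)
    (x : EuclideanSpace ℝ (Fin n)) : Set (EuclideanSpace ℝ (Fin n)) :=
  {ξ | ∀ y, g y ≥ g x + ⟪ξ, y - x⟫}

/-- The t-spherical subdifferential of `g` at `x`. -/
def sphSubdiff {n : ℕ} (g : EuclideanSpace ℝ (Fin n) → ℝ) (t : ℝ)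
    (x : EuclideanSpace ℝ (Fin n)) : Set (EuclideanSpace ℝ (Fin n)) :=
  convexHull ℝ {ξ | ∃ d : EuclideanSpace ℝ (Fin n), ‖d‖ = 1 ∧ ξ ∈ subdiff g (x + t • d)}

/-!
Fix `t > 0`. By compactness `f₁` is bounded near `x`, so every subgradient of `f₁` on the sphere
`‖y - x‖ = t` is an `ε₀`-subgradient at `x`, and hence `D_t f₁(x) ⊆ ∂_ε f₁(x)` once `ε ≥ ε₀`.
If `ξ ∈ ∂_ε f₂(x)` were not in the closed convex set `∂_ε f₁(x) + B(0, ε/t)`, a separating unit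
vector `d` would satisfy `⟪ξ, d⟫ > ⟪η, d⟫ + ε/t` for every `η ∈ ∂_ε f₁(x)`. But a subgradient
`η` of `f₂` at `x + t • d` lies in `D_t f₂(x) ⊆ D_t f₁(x) ⊆ ∂_ε f₁(x)`, and comparing the
`ε`-subgradient inequality for `ξ` with the subgradient inequality for `η` along the segment
from `x` to `x + t • d` gives `t ⟪ξ, d⟫ ≤ t ⟪η, d⟫ + ε`.
-/

open Set Metric

protected theorem ConvexOn.continuous {E : Type*} [NormedAddCommGroup E] [NormedSpace ℝ E]
    [FiniteDimensional ℝ E] {f : E → ℝ} (hf : ConvexOn ℝ univ f) : Continuous f :=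
  continuousOn_univ.1 (hf.continuousOn isOpen_univ)

/-- The functional separating `(z, f z)` from the open strict epigraph has a negative vertical
component `c`; its horizontal part divided by `-c` is the supporting functional. -/
theorem ConvexOn.exists_strongDual_le {E : Type*} [NormedAddCommGroup E] [NormedSpace ℝ E]
    {f : E → ℝ} (hf : ConvexOn ℝ univ f) (hfc : Continuous f) (z : E) :
    ∃ φ : StrongDual ℝ E, ∀ y, φ (y - z) ≤ f y - f z := by
  set S : Set (E × ℝ) := {p | f p.1 < p.2}
  have hS : Convex ℝ S := by
    simpa using ((hf.comp_linearMap (LinearMap.fst ℝ E ℝ)).sub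
      ((LinearMap.snd ℝ E ℝ).concaveOn convex_univ)).convex_lt 0
  obtain ⟨φ, hφ⟩ := geometric_hahn_banach_open_point (x := (z, f z)) hS
    (isOpen_lt (by fun_prop) continuous_snd) (lt_irrefl (f z))
  set ψ := φ.comp (ContinuousLinearMap.inl ℝ E ℝ)
  set c := φ (0, 1)
  have hsplit : ∀ y s, φ (y, s) = ψ y + s * c := by
    intro y s
    have : ((y, s) : E × ℝ) = (y, 0) + s • ((0 : E), (1 : ℝ)) := by simp
    rw [this, map_add, map_smul, smul_eq_mul]
    rfl
  have hc : c < 0 := by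
    have := hφ (z, f z + 1) (by simp [S])
    rw [hsplit, hsplit] at this
    linarith
  refine ⟨(-c)⁻¹ • ψ, fun y => ?_⟩
  have hψ : ψ (y - z) ≤ (f y - f z) * -c := by
    refine le_of_forall_pos_le_add fun ε hε => ?_
    have hδ : ε / -c * -c = ε := div_mul_cancel₀ ε (by linarith)
    have := hφ (y, f y + ε / -c) (by simp [S, div_pos hε (neg_pos.2 hc)])
    rw [hsplit, hsplit] at this
    rw [map_sub]
    linarith
  change (-c)⁻¹ * ψ (y - z) ≤ _
  rw [inv_mul_le_iff₀ (by linarith)]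
  linarith

theorem mem_add_closedBall_of_forall_inner_le {E : Type*} [NormedAddCommGroup E]
    [InnerProductSpace ℝ E] [ProperSpace E] {C : Set E} (hCconv : Convex ℝ C)
    (hCclosed : IsClosed C) (hCne : C.Nonempty) {ξ : E} {r : ℝ} (hr : 0 ≤ r)
    (h : ∀ d : E, ‖d‖ = 1 → ∃ η ∈ C, ⟪ξ, d⟫ ≤ ⟪η, d⟫ + r) : ξ ∈ C + closedBall 0 r := by
  by_contra hξ
  obtain ⟨φ, u, hφ, hu⟩ := geometric_hahn_banach_closed_point
    (hCconv.add (convex_closedBall 0 r))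
    (hCclosed.add_right_of_isCompact (isCompact_closedBall 0 r)) hξ
  set v := (InnerProductSpace.toDual ℝ E).symm φ
  have hφv : ∀ w, φ w = ⟪w, v⟫ := fun w => by
    rw [real_inner_comm]; exact InnerProductSpace.toDual_symm_apply.symm
  have hv : v ≠ 0 := by
    rintro hv
    obtain ⟨c, hc⟩ := hCne
    have := hφ (c + 0) (add_mem_add hc (mem_closedBall_self hr))
    simp only [hφv, hv, inner_zero_right] at this hu
    linarith
  set d := ‖v‖⁻¹ • v
  have hd : ‖d‖ = 1 := norm_smul_inv_norm hv
  have hφd : ∀ w, φ w = ‖v‖ * ⟪w, d⟫ := fun w => by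
    rw [hφv, real_inner_smul_right, ← mul_assoc, mul_inv_cancel₀ (norm_ne_zero_iff.2 hv), one_mul]
  obtain ⟨η, hηC, hη⟩ := h d hd
  have hηd : η + r • d ∈ C + closedBall 0 r :=
    add_mem_add hηC (by simp [norm_smul, hd, abs_of_nonneg hr])
  have hlt : ⟪η + r • d, d⟫ < ⟪ξ, d⟫ := by
    have := (hφ _ hηd).trans hu
    rwa [hφd, hφd, mul_lt_mul_iff_right₀ (norm_pos_iff.2 hv)] at this
  rw [inner_add_left, real_inner_smul_left, real_inner_self_eq_norm_sq, hd] at hlt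
  linarith

section EuclideanSpace

variable {n : ℕ} {f : EuclideanSpace ℝ (Fin n) → ℝ} {x z ξ η : EuclideanSpace ℝ (Fin n)}
  {ε ε' : ℝ}

local notation "ℝⁿ" => EuclideanSpace ℝ (Fin n)

theorem epsSubdiff_zero : epsSubdiff f 0 x = subdiff f x := by
  simp [epsSubdiff, subdiff]

theorem epsSubdiff_mono (h : ε ≤ ε') : epsSubdiff f ε x ⊆ epsSubdiff f ε' x :=
  fun ξ hξ y => by linarith [hξ y]

theorem epsSubdiff_eq_iInter :
    epsSubdiff f ε x = ⋂ y, {ξ | ⟪y - x, ξ⟫ ≤ f y - f x + ε} := by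
  ext ξ
  simp only [epsSubdiff, mem_iInter, mem_ofPred_eq]
  refine forall_congr' fun y => ?_
  rw [real_inner_comm (y - x)]
  constructor <;> intro h <;> linarith

theorem convex_epsSubdiff : Convex ℝ (epsSubdiff f ε x) := by
  rw [epsSubdiff_eq_iInter]
  exact convex_iInter fun y => convex_halfSpace_le (innerₛₗ ℝ (y - x)).isLinear _

theorem isClosed_epsSubdiff : IsClosed (epsSubdiff f ε x) := by
  rw [epsSubdiff_eq_iInter]
  exact isClosed_iInter fun y => isClosed_le (by fun_prop) continuous_const

theorem subdiff_nonempty (hf : ConvexOn ℝ univ f) (z : ℝⁿ) : (subdiff f z).Nonempty := by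
  obtain ⟨φ, hφ⟩ := hf.exists_strongDual_le hf.continuous z
  refine ⟨(InnerProductSpace.toDual ℝ ℝⁿ).symm φ, fun y => ?_⟩
  rw [InnerProductSpace.toDual_symm_apply]
  linarith [hφ y]

theorem epsSubdiff_nonempty (hf : ConvexOn ℝ univ f) (hε : 0 ≤ ε) :
    (epsSubdiff f ε x).Nonempty :=
  (subdiff_nonempty hf x).mono (epsSubdiff_zero ▸ epsSubdiff_mono hε)

theorem mem_epsSubdiff_of_mem_subdiff (hξ : ξ ∈ subdiff f z) :
    ξ ∈ epsSubdiff f (f x - f z - ⟪ξ, x - z⟫) x := fun y => by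
  have : ⟪ξ, y - z⟫ = ⟪ξ, y - x⟫ + ⟪ξ, x - z⟫ := by
    rw [← inner_add_right, sub_add_sub_cancel]
  linarith [hξ y]

theorem norm_le_of_mem_subdiff {K : ℝ} (hξ : ξ ∈ subdiff f z)
    (hK : ∀ y ∈ closedBall z 1, f y ≤ f z + K) : ‖ξ‖ ≤ K := by
  have hinner : ⟪ξ, ‖ξ‖⁻¹ • ξ⟫ = ‖ξ‖ := by
    rw [real_inner_smul_right, real_inner_self_eq_norm_sq]
    rcases eq_or_ne ‖ξ‖ 0 with h | h
    · simp [h]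
    · field_simp
  have hball : z + ‖ξ‖⁻¹ • ξ ∈ closedBall z 1 := by
    rw [mem_closedBall, dist_self_add_left, norm_smul, norm_inv, norm_norm]
    exact inv_mul_le_one_of_le₀ le_rfl (norm_nonneg _)
  have := hξ (z + ‖ξ‖⁻¹ • ξ)
  rw [add_sub_cancel_left, hinner] at this
  linarith [hK _ hball]

theorem sphSubdiff_subset_epsSubdiff (hf : Continuous f) (x : ℝⁿ) (t : ℝ) :
    ∃ ε₀, 0 ≤ ε₀ ∧ sphSubdiff f t x ⊆ epsSubdiff f ε₀ x := by
  obtain ⟨C, hC⟩ := (isCompact_closedBall x (|t| + 1)).exists_bound_of_continuousOn hf.continuousOn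
  have hosc : ∀ y ∈ closedBall x (|t| + 1), ∀ y' ∈ closedBall x (|t| + 1), f y ≤ f y' + 2 * C :=
    fun y hy y' hy' => by linarith [abs_le.1 (hC y hy), abs_le.1 (hC y' hy')]
  have hx : x ∈ closedBall x (|t| + 1) := mem_closedBall_self (by positivity)
  -- `2 * C` bounds the oscillation of `f` near `x` and hence every subgradient on the sphere;
  -- the linearization error at `x` of such a subgradient is then at most `2 * C + 2 * C * |t|`.
  refine ⟨2 * C * (1 + |t|), ?_, convexHull_min ?_ convex_epsSubdiff⟩
  · have := (norm_nonneg _).trans (hC x hx)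
    positivity
  rintro ξ ⟨d, hd, hξ⟩
  have hdist : ‖x - (x + t • d)‖ = |t| := by simp [norm_smul, hd]
  have hz : x + t • d ∈ closedBall x (|t| + 1) := by
    rw [mem_closedBall, dist_comm, dist_eq_norm, hdist]; linarith
  have hnorm : ‖ξ‖ ≤ 2 * C := norm_le_of_mem_subdiff hξ fun y hy => hosc y
    (closedBall_subset_closedBall' (by rw [dist_comm, dist_eq_norm, hdist]; linarith) hy) _ hz
  refine epsSubdiff_mono ?_ (mem_epsSubdiff_of_mem_subdiff (x := x) hξ)
  have := neg_le_of_abs_le (abs_real_inner_le_norm ξ (x - (x + t • d)))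
  rw [hdist] at this
  linarith [hosc x hx _ hz, mul_le_mul_of_nonneg_right hnorm (abs_nonneg t)]

theorem inner_smul_le_of_mem_epsSubdiff_of_mem_subdiff {t : ℝ} {d : ℝⁿ}
    (hξ : ξ ∈ epsSubdiff f ε x) (hη : η ∈ subdiff f (x + t • d)) :
    t * ⟪ξ, d⟫ ≤ t * ⟪η, d⟫ + ε := by
  have h₁ := hξ (x + t • d)
  have h₂ := hη x
  rw [add_sub_cancel_left, real_inner_smul_right] at h₁
  rw [sub_add_cancel_left, inner_neg_right, real_inner_smul_right] at h₂
  linarith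

end EuclideanSpace

theorem approx_optimality_condition_general {n : ℕ}
    (f₁ f₂ : EuclideanSpace ℝ (Fin n) → ℝ)
    (h₁ : ConvexOn ℝ Set.univ f₁) (h₂ : ConvexOn ℝ Set.univ f₂)
    (x : EuclideanSpace ℝ (Fin n))
    (hD : ∀ t : ℝ, 0 < t → sphSubdiff f₂ t x ⊆ sphSubdiff f₁ t x) :
    ∀ t : ℝ, 0 < t → ∃ ε₀ : ℝ, 0 ≤ ε₀ ∧ ∀ ε : ℝ, ε₀ ≤ ε →
      epsSubdiff f₂ ε x ⊆
        epsSubdiff f₁ ε x + Metric.closedBall (0 : EuclideanSpace ℝ (Fin n)) (ε / t) := by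
  intro t ht
  obtain ⟨ε₀, hε₀, hsph⟩ := sphSubdiff_subset_epsSubdiff h₁.continuous x t
  refine ⟨ε₀, hε₀, fun ε hε ξ hξ => ?_⟩
  have hε0 : 0 ≤ ε := hε₀.trans hε
  refine mem_add_closedBall_of_forall_inner_le convex_epsSubdiff isClosed_epsSubdiff
    (epsSubdiff_nonempty h₁ hε0) (div_nonneg hε0 ht.le) fun d hd => ?_
  obtain ⟨η, hη⟩ := subdiff_nonempty h₂ (x + t • d)
  have hη₁ : η ∈ sphSubdiff f₁ t x := hD t ht (subset_convexHull ℝ _ ⟨d, hd, hη⟩)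
  refine ⟨η, epsSubdiff_mono hε (hsph hη₁), ?_⟩
  have := inner_smul_le_of_mem_epsSubdiff_of_mem_subdiff hξ hη
  rw [← sub_le_iff_le_add', le_div_iff₀ ht]
  linarith

theorem approx_optimality_condition {n : ℕ} (hn : 1 ≤ n)
    (f₁ f₂ : EuclideanSpace ℝ (Fin n) → ℝ)
    (h₁ : ConvexOn ℝ Set.univ f₁) (h₂ : ConvexOn ℝ Set.univ f₂)
    (x : EuclideanSpace ℝ (Fin n))
    (hD : ∀ t : ℝ, 0 < t → sphSubdiff f₂ t x ⊆ sphSubdiff f₁ t x) :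
    ∀ t : ℝ, 0 < t → ∃ ε₀ : ℝ, 0 ≤ ε₀ ∧ ∀ ε : ℝ, ε₀ ≤ ε →
      epsSubdiff f₂ ε x ⊆
        epsSubdiff f₁ ε x + Metric.closedBall (0 : EuclideanSpace ℝ (Fin n)) (ε / t) :=
  approx_optimality_condition_general f₁ f₂ h₁ h₂ x hD
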